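/- arXiv:1307.7263 — 4 statements merged into one kernel-verified Lean document; each statement's English description precedes it below -/
import Mathlib

section
/- Let n ≥ 1, let η₁ > 0 and η₂ > 0 satisfy η₁ ≤ η₂ ≤ c·η₁ for some constant c > 1, and let x ∈ ℝⁿ. If S ⊆ ℝⁿ is a set of points such that η₁ ≤ ‖s − x‖ ≤ η₂ for every s ∈ S and ‖s − s'‖ ≥ η₁ for all distinct s, s' ∈ S, then S is finite and its cardinality is at most (2c + 1)ⁿ. (This is the paper's 'kissing number' bound on the number of neighbors of a state of the sparse transition system: the open balls of radius η₁/2 centered at points of S are pairwise disjoint and contained in the ball of radius (c + 1/2)·η₁ centered at x, so a volume comparison bounds |S| by (2c+1)ⁿ, a constant depending only on n and c.) -/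
/-!
The open balls of radius `η₁ / 2` around the points of `S` are pairwise disjoint and lie in the
ball of radius `(c + 1/2) η₁` around `x`. Comparing Haar measures, which scale like the `n`-th
power of the radius, bounds the number of points of any finite subset of `S` by `(2c + 1)ⁿ`;
a set all of whose finite subsets are uniformly bounded is finite.
-/

open Metric MeasureTheory Module
open scoped ENNReal

theorem Set.finite_and_ncard_le_of_forall_finset_card_le {α : Type*} {S : Set α} {N : ℕ}
    (h : ∀ t : Finset α, ↑t ⊆ S → t.card ≤ N) : S.Finite ∧ S.ncard ≤ N := by
  have hfin : S.Finite := by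
    by_contra hinf
    obtain ⟨t, hts, hcard⟩ := Set.Infinite.exists_subset_card_eq hinf (N + 1)
    have := h t hts
    omega
  refine ⟨hfin, ?_⟩
  rw [Set.ncard_eq_toFinset_card S hfin]
  exact h _ (by simp)

section Packing

variable {E : Type*} [NormedAddCommGroup E] [NormedSpace ℝ E] [FiniteDimensional ℝ E]

theorem Finset.card_mul_pow_le_of_separated {t : Finset E} {x : E} {η R : ℝ} (hη : 0 < η)
    (hR : 0 ≤ R) (ht : ∀ s ∈ t, dist s x ≤ R)
    (hsep : (t : Set E).Pairwise fun s s' => η ≤ dist s s') :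
    (t.card : ℝ) * (η / 2) ^ finrank ℝ E ≤ (R + η / 2) ^ finrank ℝ E := by
  borelize E
  let μ : Measure E := Measure.addHaar
  have hδ : 0 < η / 2 := by positivity
  have hρ : 0 < R + η / 2 := by positivity
  have hdisj : (t : Set E).PairwiseDisjoint fun s => ball s (η / 2) := fun s hs s' hs' hss' =>
    ball_disjoint_ball (by linarith [hsep hs hs' hss'])
  have hsub : ⋃ s ∈ t, ball s (η / 2) ⊆ ball x (R + η / 2) :=
    Set.iUnion₂_subset fun s hs => ball_subset_ball' (by linarith [ht s hs])
  have hvol : (t.card : ℝ≥0∞) * ENNReal.ofReal ((η / 2) ^ finrank ℝ E) * μ (ball 0 1) ≤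
      ENNReal.ofReal ((R + η / 2) ^ finrank ℝ E) * μ (ball 0 1) :=
    calc (t.card : ℝ≥0∞) * ENNReal.ofReal ((η / 2) ^ finrank ℝ E) * μ (ball 0 1)
        = μ (⋃ s ∈ t, ball s (η / 2)) := by
          rw [measure_biUnion_finset hdisj fun s _ => measurableSet_ball]
          simp only [μ.addHaar_ball_of_pos _ hδ, Finset.sum_const, nsmul_eq_mul, mul_assoc]
      _ ≤ μ (ball x (R + η / 2)) := measure_mono hsub
      _ = ENNReal.ofReal ((R + η / 2) ^ finrank ℝ E) * μ (ball 0 1) :=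
          μ.addHaar_ball_of_pos _ hρ
  have hvol' := (ENNReal.mul_le_mul_iff_left (measure_ball_pos μ _ zero_lt_one).ne'
    measure_ball_lt_top.ne).1 hvol
  rw [← ENNReal.ofReal_natCast, ← ENNReal.ofReal_mul (Nat.cast_nonneg _),
    ENNReal.ofReal_le_ofReal_iff (by positivity)] at hvol'
  exact hvol'

theorem Finset.card_le_of_separated {t : Finset E} {x : E} {η R : ℝ} (hη : 0 < η)
    (hR : 0 ≤ R) (ht : ∀ s ∈ t, dist s x ≤ R)
    (hsep : (t : Set E).Pairwise fun s s' => η ≤ dist s s') :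
    (t.card : ℝ) ≤ (2 * R / η + 1) ^ finrank ℝ E := by
  have hδ : 0 < (η / 2) ^ finrank ℝ E := by positivity
  refine le_of_mul_le_mul_right ?_ hδ
  rw [← mul_pow, show (2 * R / η + 1) * (η / 2) = R + η / 2 by field_simp]
  exact Finset.card_mul_pow_le_of_separated hη hR ht hsep

end Packing

theorem sparse_rrg_neighbor_bound_general
    (n : ℕ) (η₁ η₂ c : ℝ)
    (hη₁ : 0 < η₁) (hc : 1 < c)
    (h2c : η₂ ≤ c * η₁)
    (x : EuclideanSpace ℝ (Fin n)) (S : Set (EuclideanSpace ℝ (Fin n)))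
    (hann : ∀ s ∈ S, η₁ ≤ ‖s - x‖ ∧ ‖s - x‖ ≤ η₂)
    (hsep : ∀ s ∈ S, ∀ s' ∈ S, s ≠ s' → η₁ ≤ ‖s - s'‖) :
    S.Finite ∧ (S.ncard : ℝ) ≤ (2 * c + 1) ^ n := by
  have hbound : 0 ≤ (2 * c + 1) ^ n := pow_nonneg (by linarith) n
  have hfinset : ∀ t : Finset (EuclideanSpace ℝ (Fin n)), ↑t ⊆ S →
      t.card ≤ ⌊(2 * c + 1) ^ n⌋₊ := by
    intro t hts
    refine Nat.le_floor ?_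
    have hpacking := Finset.card_le_of_separated (x := x) hη₁ (mul_nonneg (by linarith) hη₁.le)
      (fun s hs => (dist_eq_norm s x).trans_le ((hann s (hts hs)).2.trans h2c))
      (fun s hs s' hs' hss' =>
        (hsep s (hts hs) s' (hts hs') hss').trans_eq (dist_eq_norm s s').symm)
    rwa [finrank_euclideanSpace_fin, mul_div_assoc, mul_div_cancel_right₀ c hη₁.ne'] at hpacking
  obtain ⟨hfin, hcard⟩ := Set.finite_and_ncard_le_of_forall_finset_card_le hfinset
  exact ⟨hfin, (Nat.cast_le.2 hcard).trans (Nat.floor_le hbound)⟩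

/-- Kissing-number style bound: if every point of `S` lies in the annulus
`η₁ ≤ ‖s - x‖ ≤ η₂` around `x`, with `η₁ ≤ η₂ ≤ c·η₁`, and the points of `S`
are pairwise `η₁`-separated, then `S` is finite with at most `(2c+1)^n` points. -/
theorem sparse_rrg_neighbor_bound
    (n : ℕ) (hn : 1 ≤ n) (η₁ η₂ c : ℝ)
    (hη₁ : 0 < η₁) (hη₂ : 0 < η₂) (hc : 1 < c)
    (h12 : η₁ ≤ η₂) (h2c : η₂ ≤ c * η₁)
    (x : EuclideanSpace ℝ (Fin n)) (S : Set (EuclideanSpace ℝ (Fin n)))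
    (hann : ∀ s ∈ S, η₁ ≤ ‖s - x‖ ∧ ‖s - x‖ ≤ η₂)
    (hsep : ∀ s ∈ S, ∀ s' ∈ S, s ≠ s' → η₁ ≤ ‖s - s'‖) :
    S.Finite ∧ (S.ncard : ℝ) ≤ (2 * c + 1) ^ n :=
  sparse_rrg_neighbor_bound_general n η₁ η₂ c hη₁ hc h2c x S hann hsep
end

section
/- Let n ≥ 1 and let G be a finite directed graph whose vertex set V is a set of points of ℝⁿ that is η₁-separated (all pairwise distances between distinct vertices are at least η₁ > 0), and suppose every edge (u, v) of G satisfies ‖u − v‖ ≤ η₂, where η₁ ≤ η₂ ≤ c·η₁ for some constant c > 1. Then the number of edges of G is at most (2c + 1)ⁿ · |V|. In particular the number of edges is O(|V|), i.e., G is a sparse graph. (This is the claim, used in the proof of the paper's complexity theorem, that the metric sparseness of the transition system built by the Sparse RRG algorithm implies topological sparseness of its underlying graph.) -/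
/-!
The balls of radius `η₁ / 2` around the out-neighbours of a vertex `u` are pairwise disjoint and
lie in the ball of radius `η₂ + η₁ / 2` around `u`, so comparing Haar volumes shows that `u` has at
most `(2 η₂ / η₁ + 1) ^ n ≤ (2 c + 1) ^ n` out-neighbours. Summing over the vertices bounds the
number of edges.
-/

open Finset Metric Module MeasureTheory
open scoped ENNReal

theorem Finset.card_le_of_pairwise_le_dist_of_subset_closedBall
    {E : Type*} [NormedAddCommGroup E] [NormedSpace ℝ E] [FiniteDimensional ℝ E]
    {s : Finset E} {x : E} {δ ρ : ℝ} (hδ : 0 < δ) (hρ : 0 ≤ ρ)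
    (hsep : (s : Set E).Pairwise fun y z => δ ≤ dist y z) (hs : (s : Set E) ⊆ closedBall x ρ) :
    (#s : ℝ) ≤ (2 * ρ / δ + 1) ^ finrank ℝ E := by
  borelize E
  set μ : Measure E := Measure.addHaar
  have hdisj : (s : Set E).PairwiseDisjoint (ball · (δ / 2)) := fun y hy z hz hyz =>
    ball_disjoint_ball (by linarith [hsep hy hz hyz])
  have hsub : ⋃ y ∈ s, ball y (δ / 2) ⊆ ball x (ρ + δ / 2) :=
    Set.iUnion₂_subset fun y hy => ball_subset_ball' (by linarith [mem_closedBall.1 (hs hy)])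
  have hvol : (#s : ℝ≥0∞) * ENNReal.ofReal ((δ / 2) ^ finrank ℝ E) * μ (ball 0 1) ≤
      ENNReal.ofReal ((ρ + δ / 2) ^ finrank ℝ E) * μ (ball 0 1) :=
    calc _ = μ (⋃ y ∈ s, ball y (δ / 2)) := by
          rw [measure_biUnion_finset hdisj fun _ _ => measurableSet_ball]
          simp only [μ.addHaar_ball_of_pos _ (half_pos hδ), sum_const, nsmul_eq_mul, mul_assoc]
      _ ≤ μ (ball x (ρ + δ / 2)) := measure_mono hsub
      _ = _ := μ.addHaar_ball_of_pos _ (by positivity)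
  have hcard : (#s : ℝ) * (δ / 2) ^ finrank ℝ E ≤ (ρ + δ / 2) ^ finrank ℝ E := by
    rw [← ENNReal.ofReal_le_ofReal_iff (by positivity), ENNReal.ofReal_mul (by positivity)]
    simpa using (ENNReal.mul_le_mul_iff_left (measure_ball_pos μ _ one_pos).ne'
      measure_ball_lt_top.ne).1 hvol
  have hratio :
      (2 * ρ / δ + 1) ^ finrank ℝ E = (ρ + δ / 2) ^ finrank ℝ E / (δ / 2) ^ finrank ℝ E := by
    rw [← div_pow]; congr 1; field_simp
  rw [hratio, le_div_iff₀ (by positivity)]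
  exact hcard

theorem Finset.card_le_mul_card_of_card_image_snd_filter_le
    {α β : Type*} [DecidableEq α] [DecidableEq β] {E : Finset (α × β)} {V : Finset α} {K : ℝ}
    (hE : ∀ e ∈ E, e.1 ∈ V)
    (hK : ∀ u ∈ V, (#((E.filter fun e => e.1 = u).image Prod.snd) : ℝ) ≤ K) :
    (#E : ℝ) ≤ K * #V := by
  have hfiber : ∀ u ∈ V, (#(E.filter fun e => e.1 = u) : ℝ) ≤ K := fun u hu => by
    rw [← card_image_of_injOn (f := Prod.snd) fun e he f hf hef =>
      Prod.ext ((mem_filter.1 he).2.trans (mem_filter.1 hf).2.symm) hef]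
    exact hK u hu
  calc (#E : ℝ) = ∑ u ∈ V, (#(E.filter fun e => e.1 = u) : ℝ) := by
        exact_mod_cast card_eq_sum_card_fiberwise hE
    _ ≤ ∑ _u ∈ V, K := sum_le_sum hfiber
    _ = K * #V := by rw [sum_const, nsmul_eq_mul, mul_comm]

theorem sparse_graph_edge_bound_general
    (n : ℕ) (η₁ η₂ c : ℝ)
    (hη₁ : 0 < η₁)
    (h12 : η₁ ≤ η₂) (h2c : η₂ ≤ c * η₁)
    (V : Finset (EuclideanSpace ℝ (Fin n)))
    (E : Finset (EuclideanSpace ℝ (Fin n) × EuclideanSpace ℝ (Fin n)))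
    (hE : ∀ e ∈ E, e.1 ∈ V ∧ e.2 ∈ V ∧ e.1 ≠ e.2)
    (hsep : ∀ u ∈ V, ∀ v ∈ V, u ≠ v → η₁ ≤ ‖u - v‖)
    (hlen : ∀ e ∈ E, ‖e.1 - e.2‖ ≤ η₂) :
    (E.card : ℝ) ≤ (2 * c + 1) ^ n * V.card := by
  classical
  refine card_le_mul_card_of_card_image_snd_filter_le (fun e he => (hE e he).1) fun u _ => ?_
  have hout : ∀ v ∈ (E.filter fun e => e.1 = u).image Prod.snd, v ∈ V ∧ dist v u ≤ η₂ := by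
    simp only [mem_image, mem_filter]
    rintro v ⟨e, ⟨he, rfl⟩, rfl⟩
    exact ⟨(hE e he).2.1, by rw [dist_comm, dist_eq_norm]; exact hlen e he⟩
  have hη₂ : 0 ≤ η₂ := hη₁.le.trans h12
  have hratio : 2 * η₂ / η₁ + 1 ≤ 2 * c + 1 := by
    rw [div_add_one hη₁.ne', div_le_iff₀ hη₁]; linarith
  calc _ ≤ (2 * η₂ / η₁ + 1) ^ finrank ℝ (EuclideanSpace ℝ (Fin n)) :=
        card_le_of_pairwise_le_dist_of_subset_closedBall hη₁ hη₂
          (fun v hv w hw hvw => by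
            simpa only [dist_eq_norm] using hsep v (hout v hv).1 w (hout w hw).1 hvw)
          fun v hv => mem_closedBall.2 (hout v hv).2
    _ ≤ (2 * c + 1) ^ n := by
        rw [finrank_euclideanSpace_fin]; exact pow_le_pow_left₀ (by positivity) hratio n

/-- Metric sparseness implies topological sparseness: a directed graph on an
`η₁`-separated vertex set `V ⊆ ℝⁿ`, whose edges are ordered pairs of distinct
vertices of Euclidean length at most `η₂` with `η₁ ≤ η₂ ≤ c·η₁`, has at most
`(2c+1)^n · |V|` edges. -/
theorem sparse_graph_edge_bound
    (n : ℕ) (hn : 1 ≤ n) (η₁ η₂ c : ℝ)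
    (hη₁ : 0 < η₁) (hc : 1 < c)
    (h12 : η₁ ≤ η₂) (h2c : η₂ ≤ c * η₁)
    (V : Finset (EuclideanSpace ℝ (Fin n)))
    (E : Finset (EuclideanSpace ℝ (Fin n) × EuclideanSpace ℝ (Fin n)))
    (hE : ∀ e ∈ E, e.1 ∈ V ∧ e.2 ∈ V ∧ e.1 ≠ e.2)
    (hsep : ∀ u ∈ V, ∀ v ∈ V, u ≠ v → η₁ ≤ ‖u - v‖)
    (hlen : ∀ e ∈ E, ‖e.1 - e.2‖ ≤ η₂) :
    (E.card : ℝ) ≤ (2 * c + 1) ^ n * V.card :=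
  sparse_graph_edge_bound_general n η₁ η₂ c hη₁ h12 h2c V E hE hsep hlen
end

section
/- Let E be a measurable space, let (Xᵢ)_{i∈ℕ} be an independent and identically distributed sequence of E-valued random variables with common distribution P, and let U₀, U₁, …, U_m ⊆ E be measurable sets with P(U_j) > 0 for every j. For N ∈ ℕ let A_N be the event that there exist indices i₀ < i₁ < ⋯ < i_m < N with X_{i_j} ∈ U_j for all j. Then ℙ(A_N) → 1 as N → ∞. (This is the quantitative form of probabilistic completeness: as the number of samples goes to infinity, the probability that the transition system contains states in all the required neighborhoods, visited in the required order, goes to 1.) -/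
open MeasureTheory ProbabilityTheory Filter

/-!
Cut the sample sequence into consecutive blocks of length `m + 1` and let `C k` be the event that
the `j`-th sample of block `k` lies in `U j` for every `j`. The events `C k` are independent,
since they depend on disjoint sets of samples, and all have the same probability
`∏ j, P (U j) > 0`. By the second Borel–Cantelli lemma almost surely some `C k` occurs, and
`C k` produces the required increasing indices below `(k + 1) * (m + 1)`; the events of the
theorem increase in `N`, so their probabilities converge to the probability of their union, `1`.
-/

namespace ProbabilityTheory

variable {Ω κ J β : Type*} [MeasurableSpace Ω] [MeasurableSpace β] {μ : Measure Ω}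
  [Fintype J] {Y : κ × J → Ω → β} {V : κ × J → Set β}

lemma iIndepFun.measure_biInter_iInter_preimage (hY : iIndepFun Y μ)
    (hV : ∀ p, MeasurableSet (V p)) (S : Finset κ) :
    μ (⋂ k ∈ S, ⋂ j, Y (k, j) ⁻¹' V (k, j)) = ∏ k ∈ S, ∏ j, μ (Y (k, j) ⁻¹' V (k, j)) := by
  rw [← Finset.prod_product', ← hY.measure_inter_preimage_eq_mul _ fun p _ ↦ hV p]
  congr 1
  ext ω
  simp only [Set.mem_iInter, Set.mem_preimage, Finset.mem_product, Finset.mem_univ, and_true,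
    Prod.forall]
  exact ⟨fun h a b ha ↦ h a ha b, fun h a ha b ↦ h a b ha⟩

lemma iIndepFun.iIndepSet_iInter_preimage (hY : iIndepFun Y μ) (hYm : ∀ p, Measurable (Y p))
    (hV : ∀ p, MeasurableSet (V p)) :
    iIndepSet (fun k ↦ ⋂ j, Y (k, j) ⁻¹' V (k, j)) μ := by
  refine (iIndepSet_iff_meas_biInter fun k ↦ .iInter fun j ↦ hYm _ (hV _)).2 fun S ↦ ?_
  rw [hY.measure_biInter_iInter_preimage hV]
  refine Finset.prod_congr rfl fun k _ ↦ ?_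
  simpa using (hY.measure_biInter_iInter_preimage hV {k}).symm

lemma iIndepSet.measure_iUnion_eq_one {s : ℕ → Set Ω} (hsm : ∀ n, MeasurableSet (s n))
    (hs : iIndepSet s μ) (hs' : ∑' n, μ (s n) = ⊤) : μ (⋃ n, s n) = 1 := by
  have := hs.isProbabilityMeasure
  refine le_antisymm prob_le_one ?_
  calc 1 = μ (limsup s atTop) := (measure_limsup_eq_one hsm hs hs').symm
    _ ≤ μ (⋃ n, s n) := measure_mono limsup_le_iSup

end ProbabilityTheory

/-- Quantitative probabilistic completeness: for an i.i.d. sequence with common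
law `P` and measurable sets `U 0, …, U m` of positive `P`-measure, the
probability that among the first `N` samples there are indices
`i 0 < i 1 < ⋯ < i m < N` with `X (i j) ∈ U j` for all `j` tends to `1` as
`N → ∞`. -/
theorem iid_hits_in_order_prob_tendsto_one
    {Ω E : Type*} [MeasurableSpace Ω] [MeasurableSpace E]
    (μ : Measure Ω) [IsProbabilityMeasure μ]
    (X : ℕ → Ω → E) (hXmeas : ∀ i, Measurable (X i))
    (hindep : iIndepFun X μ)
    (P : Measure E) (hdist : ∀ i, Measure.map (X i) μ = P)
    (m : ℕ) (U : Fin (m + 1) → Set E)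
    (hU : ∀ j, MeasurableSet (U j)) (hP : ∀ j, 0 < P (U j)) :
    Tendsto
      (fun N : ℕ =>
        μ {ω | ∃ i : Fin (m + 1) → ℕ,
            StrictMono i ∧ (∀ j, i j < N) ∧ ∀ j, X (i j) ω ∈ U j})
      atTop (nhds 1) := by
  set A : ℕ → Set Ω := fun N ↦ {ω | ∃ i : Fin (m + 1) → ℕ,
    StrictMono i ∧ (∀ j, i j < N) ∧ ∀ j, X (i j) ω ∈ U j}
  -- `block (k, j) = k * (m + 1) + j`
  set block := (Nat.divModEquiv (m + 1)).symm
  set C : ℕ → Set Ω := fun k ↦ ⋂ j, X (block (k, j)) ⁻¹' U j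
  have hY := hindep.precomp block.injective
  have hC_indep : iIndepSet C μ :=
    hY.iIndepSet_iInter_preimage (fun _ ↦ hXmeas _) (V := fun p ↦ U p.2) fun p ↦ hU p.2
  have hC_meas : ∀ k, MeasurableSet (C k) := fun k ↦ .iInter fun j ↦ hXmeas _ (hU j)
  have hlaw : ∀ i j, μ (X i ⁻¹' U j) = P (U j) := fun i j ↦ by
    rw [← hdist i, Measure.map_apply (hXmeas i) (hU j)]
  have hC_prob : ∀ k, μ (C k) = ∏ j, P (U j) := fun k ↦ by
    simpa [hlaw] using
      hY.measure_biInter_iInter_preimage (V := fun p ↦ U p.2) (fun p ↦ hU p.2) {k}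
  have hC_union : μ (⋃ k, C k) = 1 := hC_indep.measure_iUnion_eq_one hC_meas <| by
    simpa [hC_prob] using ENNReal.tsum_const_eq_top_of_ne_zero (α := ℕ)
      (CanonicallyOrderedAdd.prod_pos.2 fun j _ ↦ hP j).ne'
  have hA_mono : Monotone A := fun N N' hN ω ⟨i, hi, hiN, hiU⟩ ↦
    ⟨i, hi, fun j ↦ (hiN j).trans_le hN, hiU⟩
  have hC_sub : ⋃ k, C k ⊆ ⋃ N, A N := by
    refine Set.iUnion_subset fun k ω hω ↦ Set.mem_iUnion.2 ⟨(k + 1) * (m + 1), ?_⟩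
    refine ⟨fun j ↦ block (k, j), fun j j' h ↦ ?_, fun j ↦ ?_, Set.mem_iInter.1 hω⟩
    · simpa [block] using h
    · simp only [block, Nat.divModEquiv_symm_apply]
      nlinarith [j.isLt]
  have hA_union : μ (⋃ N, A N) = 1 :=
    le_antisymm prob_le_one (hC_union ▸ measure_mono hC_sub)
  rw [← hA_union]
  exact tendsto_measure_iUnion_atTop hA_mono
end

section
/- Let S be a finite set, let R ⊆ S × S be a binary relation (the transition relation of a finite automaton or product automaton), let s₀ ∈ S, and let F ⊆ S. Then the following are equivalent: (1) there exists an infinite sequence x : ℕ → S with x(0) = s₀, (x(k), x(k+1)) ∈ R for all k ≥ 0, and the set {k ∈ ℕ : x(k) ∈ F} infinite; (2) there exists f ∈ F such that f is reachable from s₀ under the reflexive-transitive closure of R and (f, f) belongs to the transitive closure of R (i.e., there is a cycle through f of length at least 1). (This is the correctness criterion of the paper's incremental search: a satisfying — accepting — trajectory of the product automaton exists if and only if some final state is reachable from an initial state and lies on a non-degenerate cycle; moreover the satisfying run can be taken as a finite prefix followed by infinitely many repetitions of a finite suffix.) -/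
/-!
Since `S` is finite, a run visiting `F` infinitely often visits some `f ∈ F` at two times
`i < j`; its first `i` steps reach `f` and the steps between the two visits form a cycle
through `f`. Conversely, a path from `s₀` to `f` followed by the cycle through `f` repeated
forever is an accepting run.
-/

open Relation Set

section

variable {S : Type*} {R : S → S → Prop}

theorem Relation.ReflTransGen.of_run {x : ℕ → S} (hx : ∀ k, R (x k) (x (k + 1))) {m n : ℕ}
    (hmn : m ≤ n) : ReflTransGen R (x m) (x n) := by
  induction n, hmn using Nat.le_induction with
  | base => exact .refl
  | succ n _ ih => exact ih.tail (hx n)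

theorem Relation.TransGen.of_run {x : ℕ → S} (hx : ∀ k, R (x k) (x (k + 1))) {m n : ℕ}
    (hmn : m < n) : TransGen R (x m) (x n) :=
  .head' (hx m) (.of_run hx hmn)

theorem Relation.ReflTransGen.exists_path {a b : S} (h : ReflTransGen R a b) :
    ∃ n, ∃ p : ℕ → S, p 0 = a ∧ p n = b ∧ ∀ k < n, R (p k) (p (k + 1)) := by
  induction h using ReflTransGen.head_induction_on with
  | refl => exact ⟨0, fun _ => b, rfl, rfl, by simp⟩
  | head hac _ ih =>
    obtain ⟨n, p, rfl, hpn, hp⟩ := ih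
    -- `Stream' S` is `ℕ → S`, so `Stream'.cons` prepends a term to a sequence.
    refine ⟨n + 1, Stream'.cons _ p, rfl, hpn, ?_⟩
    rintro (_ | k) hk
    · exact hac
    · exact hp k (by omega)

theorem Relation.TransGen.exists_path {a b : S} (h : TransGen R a b) :
    ∃ n > 0, ∃ p : ℕ → S, p 0 = a ∧ p n = b ∧ ∀ k < n, R (p k) (p (k + 1)) := by
  obtain ⟨c, hac, hcb⟩ := TransGen.head'_iff.mp h
  obtain ⟨n, p, rfl, hpn, hp⟩ := hcb.exists_path
  refine ⟨n + 1, n.succ_pos, Stream'.cons a p, rfl, hpn, ?_⟩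
  rintro (_ | k) hk
  · exact hac
  · exact hp k (by omega)

theorem run_mod_of_closed_path {p : ℕ → S} {m : ℕ} (hm : 0 < m) (hpm : p m = p 0)
    (hp : ∀ k < m, R (p k) (p (k + 1))) (k : ℕ) : R (p (k % m)) (p ((k + 1) % m)) := by
  have hlt := Nat.mod_lt k hm
  have hstep := hp _ hlt
  rw [← Nat.mod_add_mod]
  rcases (show k % m + 1 ≤ m from hlt).lt_or_eq with hlt' | heq
  · rwa [Nat.mod_eq_of_lt hlt']
  · rw [heq, Nat.mod_self, ← hpm]
    rwa [heq] at hstep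

theorem Relation.TransGen.exists_run_infinite_setOf_eq {f : S} (h : TransGen R f f) :
    ∃ x : ℕ → S, x 0 = f ∧ (∀ k, R (x k) (x (k + 1))) ∧ {k | x k = f}.Infinite := by
  obtain ⟨m, hm, p, hp0, hpm, hp⟩ := h.exists_path
  refine ⟨fun k => p (k % m), by simpa using hp0, run_mod_of_closed_path hm (hpm.trans hp0.symm) hp,
    infinite_of_injective_forall_mem (f := (· * m)) (mul_left_injective₀ hm.ne') fun i => ?_⟩
  simpa [Nat.mul_mod_left] using hp0

theorem Relation.ReflTransGen.exists_run_append {a b : S} (h : ReflTransGen R a b) {y : ℕ → S}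
    (hy0 : y 0 = b) (hy : ∀ k, R (y k) (y (k + 1))) :
    ∃ x : ℕ → S, x 0 = a ∧ (∀ k, R (x k) (x (k + 1))) ∧ ∃ n, ∀ k, x (n + k) = y k := by
  induction h using ReflTransGen.head_induction_on with
  | refl => exact ⟨y, hy0, hy, 0, by simp⟩
  | head hac _ ih =>
    obtain ⟨x, rfl, hx, n, hxy⟩ := ih
    refine ⟨Stream'.cons _ x, rfl, ?_, n + 1, fun k => ?_⟩
    · rintro (_ | k)
      · exact hac
      · exact hx k
    · rw [Nat.add_right_comm]
      exact hxy k

end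

/-- Correctness criterion of the incremental search: in a finite transition
structure, there is an infinite run from `s₀` visiting the accepting set `F`
infinitely often iff some `f ∈ F` is reachable from `s₀` and lies on a cycle
of length at least 1. -/
theorem accepting_run_iff_reachable_cycle
    {S : Type*} [Finite S] (R : S → S → Prop) (s₀ : S) (F : Set S) :
    (∃ x : ℕ → S, x 0 = s₀ ∧ (∀ k : ℕ, R (x k) (x (k + 1))) ∧
        {k : ℕ | x k ∈ F}.Infinite) ↔
      (∃ f ∈ F, Relation.ReflTransGen R s₀ f ∧ Relation.TransGen R f f) := by
  constructor
  · rintro ⟨x, rfl, hx, hinf⟩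
    obtain ⟨i, hi, j, -, hij, hxij⟩ :=
      hinf.exists_lt_map_eq_of_mapsTo (mapsTo_univ x _) finite_univ
    exact ⟨x i, hi, .of_run hx i.zero_le, by simpa only [hxij] using TransGen.of_run hx hij⟩
  · rintro ⟨f, hf, hreach, hcycle⟩
    obtain ⟨y, hy0, hy, hyf⟩ := hcycle.exists_run_infinite_setOf_eq
    obtain ⟨x, hx0, hx, n, hxy⟩ := hreach.exists_run_append hy0 hy
    refine ⟨x, hx0, hx, (hyf.image (add_right_injective n).injOn).mono ?_⟩
    rintro _ ⟨k, rfl : y k = f, rfl⟩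
    simpa [hxy] using hf
end
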